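/- Let R be a 6-ring. Then χ(R) = ω(R), i.e., the chromatic number of a 6-ring equals its clique number. -/

import Mathlib

open SimpleGraph

namespace Paper

variable {V : Type*}

/-- `X` is complete to `Y` in `G`. -/
def CompleteTo (G : SimpleGraph V) (X Y : Set V) : Prop :=
  ∀ x ∈ X, ∀ y ∈ Y, G.Adj x y

/-- `X` is anticomplete to `Y` in `G`. -/
def AnticompleteTo (G : SimpleGraph V) (X Y : Set V) : Prop :=
  ∀ x ∈ X, ∀ y ∈ Y, ¬ G.Adj x y

/-- Closed neighborhood of `v` inside the induced subgraph of `G` on `S`. -/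
def cnbr (G : SimpleGraph V) (S : Set V) (v : V) : Set V :=
  {w | w ∈ S ∧ (w = v ∨ G.Adj v w)}

/-- Neighbors of `v` inside the set `X`. -/
def nbrIn (G : SimpleGraph V) (X : Set V) (v : V) : Set V :=
  {w | w ∈ X ∧ G.Adj v w}

/-- `G` is a complete graph. -/
def IsCompleteGraph (G : SimpleGraph V) : Prop :=
  ∀ u v : V, u ≠ v → G.Adj u v

/-- The induced subgraph of `G` on `S` admits a clique-cutset: a (possibly empty) clique
`C ⊊ S` such that removing `C` from the induced subgraph on `S` disconnects it. -/
def HasCliqueCutsetOn (G : SimpleGraph V) (S : Set V) : Prop :=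
  ∃ C : Set V, C ⊆ S ∧ C ≠ S ∧ G.IsClique C ∧ ¬ (G.induce (S \ C)).Connected

def HasCliqueCutset (G : SimpleGraph V) : Prop :=
  HasCliqueCutsetOn G Set.univ

/-- The induced subgraph of `G` on `S` contains an induced copy of `H`. -/
def ContainsInducedOn {W : Type*} (G : SimpleGraph V) (S : Set V) (H : SimpleGraph W) : Prop :=
  ∃ f : W ↪ V, (∀ a, f a ∈ S) ∧ ∀ a b, G.Adj (f a) (f b) ↔ H.Adj a b

/-- The induced subgraph of `G` on `S` is `H`-free. -/
def FreeOn {W : Type*} (G : SimpleGraph V) (S : Set V) (H : SimpleGraph W) : Prop :=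
  ¬ ContainsInducedOn G S H

/-- `G` is `H`-free. -/
def Free {W : Type*} (G : SimpleGraph V) (H : SimpleGraph W) : Prop :=
  FreeOn G Set.univ H

/-- The path on `n` vertices. -/
def pathG (n : ℕ) : SimpleGraph (Fin n) :=
  SimpleGraph.fromRel (fun i j => (i : ℕ) + 1 = (j : ℕ))

/-- The cycle on `n` vertices. -/
def cycG (n : ℕ) : SimpleGraph (ZMod n) :=
  SimpleGraph.fromRel (fun i j => i + 1 = j)

/-- The graph `Θ₃ʳ`: `r` internally disjoint three-edge paths meeting at their endpoints.
`Sum.inl 0` and `Sum.inl 1` are the two endpoints, and `Sum.inr (i, 0)`, `Sum.inr (i, 1)`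
are the internal vertices of the `i`-th path. -/
def thetaG (r : ℕ) : SimpleGraph (Fin 2 ⊕ Fin r × Fin 2) :=
  SimpleGraph.fromRel (fun x y =>
    (∃ i : Fin r, x = Sum.inl 0 ∧ y = Sum.inr (i, 0)) ∨
    (∃ i : Fin r, x = Sum.inr (i, 0) ∧ y = Sum.inr (i, 1)) ∨
    (∃ i : Fin r, x = Sum.inr (i, 1) ∧ y = Sum.inl 1))

/-- `B` is the vertex set of an anticomponent of `G`. -/
def IsAnticomponent (G : SimpleGraph V) (B : Set V) : Prop :=
  ∃ c : Gᶜ.ConnectedComponent, B = c.supp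

/-- `G` has exactly one nontrivial anticomponent, and that anticomponent satisfies `P`. -/
def ExactlyOneNontrivialAnticomponent (G : SimpleGraph V) (P : Set V → Prop) : Prop :=
  ∃ B : Set V, IsAnticomponent G B ∧ B.Nontrivial ∧
    (∀ B' : Set V, IsAnticomponent G B' → B'.Nontrivial → B' = B) ∧ P B

/-- The stability number of the induced subgraph of `G` on `S`. -/
noncomputable def alphaOn (G : SimpleGraph V) (S : Set V) : ℕ :=
  sSup {n | ∃ T : Finset V, ↑T ⊆ S ∧ (∀ x ∈ T, ∀ y ∈ T, x ≠ y → ¬ G.Adj x y) ∧ T.card = n}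

/-- The clique number of `G`. -/
noncomputable def cliqueNumber (G : SimpleGraph V) : ℕ :=
  sSup {n | ∃ T : Finset V, G.IsNClique n T}

/-- A 7-hole in `G`, given by an injective map `x : ZMod 7 → V` whose image induces a `C₇`
traversed in the order `x 0, x 1, …, x 6, x 0`. -/
def IsHole7 (G : SimpleGraph V) (x : ZMod 7 → V) : Prop :=
  Function.Injective x ∧ ∀ i j, G.Adj (x i) (x j) ↔ (i - j = 1 ∨ j - i = 1)

/-- The set `A_i^*`: vertices of `A i` anticomplete to `A (i-2) ∪ A (i+2)`. -/
def braceletStar (G : SimpleGraph V) (A : ZMod 7 → Set V) (i : ZMod 7) : Set V :=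
  {v | v ∈ A i ∧ ∀ w ∈ A (i - 2) ∪ A (i + 2), ¬ G.Adj v w}

/-- The set `A_i^+`: vertices of `A i` anticomplete to `A (i-2)` with a neighbor in `A (i+2)`. -/
def braceletPlus (G : SimpleGraph V) (A : ZMod 7 → Set V) (i : ZMod 7) : Set V :=
  {v | v ∈ A i ∧ (∀ w ∈ A (i - 2), ¬ G.Adj v w) ∧ ∃ w ∈ A (i + 2), G.Adj v w}

/-- The set `A_i^-`: vertices of `A i` anticomplete to `A (i+2)` with a neighbor in `A (i-2)`. -/
def braceletMinus (G : SimpleGraph V) (A : ZMod 7 → Set V) (i : ZMod 7) : Set V :=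
  {v | v ∈ A i ∧ (∀ w ∈ A (i + 2), ¬ G.Adj v w) ∧ ∃ w ∈ A (i - 2), G.Adj v w}

/-- The induced subgraph of `G` on `S` is a 7-bracelet with good pair `(A, istar)`. -/
def IsGoodPairOn (G : SimpleGraph V) (S : Set V) (A : ZMod 7 → Set V) (istar : ZMod 7) : Prop :=
  -- `A` is a partition of `S`
  (⋃ i, A i) = S ∧
  (∀ i j : ZMod 7, i ≠ j → Disjoint (A i) (A j)) ∧
  -- (I)
  (∀ i, (A i).Nonempty ∧ G.IsClique (A i) ∧
    CompleteTo G (A i) (A (i - 1) ∪ A (i + 1)) ∧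
    AnticompleteTo G (A i) (A (i - 3) ∪ A (i + 3))) ∧
  -- (II) (a)-(c): `A i` is partitioned into the canonical sets `A_i^*, A_i^+, A_i^-`
  (∀ i, A i = braceletStar G A i ∪ braceletPlus G A i ∪ braceletMinus G A i) ∧
  -- (II) (d),(e): closed neighborhoods (in the induced subgraph on `S`) of vertices of
  -- `A_i^+` (resp. `A_i^-`) form a chain under inclusion
  (∀ i, ∀ u ∈ braceletPlus G A i, ∀ v ∈ braceletPlus G A i,
    cnbr G S u ⊆ cnbr G S v ∨ cnbr G S v ⊆ cnbr G S u) ∧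
  (∀ i, ∀ u ∈ braceletMinus G A i, ∀ v ∈ braceletMinus G A i,
    cnbr G S u ⊆ cnbr G S v ∨ cnbr G S v ⊆ cnbr G S u) ∧
  -- (II) (f)
  (∀ i, ∃ v ∈ A i, (∃ w ∈ A (i - 2), ¬ G.Adj v w) ∧ ∃ w ∈ A (i + 2), ¬ G.Adj v w) ∧
  -- (III)
  braceletPlus G A (istar - 3) = ∅ ∧ braceletMinus G A (istar - 3) = ∅ ∧
  braceletPlus G A (istar + 3) = ∅ ∧ braceletMinus G A (istar + 3) = ∅ ∧
  -- (IV)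
  braceletMinus G A (istar - 2) = ∅ ∧ braceletPlus G A (istar + 2) = ∅ ∧
  -- (V)
  braceletMinus G A (istar - 1) = ∅ ∧ braceletPlus G A (istar + 1) = ∅

def IsGoodPartitionOn (G : SimpleGraph V) (S : Set V) (A : ZMod 7 → Set V) : Prop :=
  ∃ istar, IsGoodPairOn G S A istar

/-- The induced subgraph of `G` on `S` is a 7-bracelet. -/
def IsBracelet7On (G : SimpleGraph V) (S : Set V) : Prop :=
  ∃ A istar, IsGoodPairOn G S A istar

/-- The induced subgraph of `G` on `S` is a quasi-7-bracelet with good partition `A`. -/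
def IsQuasiGoodPartitionOn (G : SimpleGraph V) (S : Set V) (A : ZMod 7 → Set V) : Prop :=
  (⋃ i, A i) = S ∧
  (∀ i j : ZMod 7, i ≠ j → Disjoint (A i) (A j)) ∧
  (∀ i, (A i).Nonempty ∧ G.IsClique (A i) ∧
    CompleteTo G (A i) (A (i - 1) ∪ A (i + 1)) ∧
    AnticompleteTo G (A i) (A (i - 3) ∪ A (i + 3))) ∧
  (∀ i, ∃ v ∈ A i, (∃ w ∈ A (i - 2), ¬ G.Adj v w) ∧ ∃ w ∈ A (i + 2), ¬ G.Adj v w)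

/-- The induced subgraph of `G` on `S` is a thickened emerald with good triple `(A, C, istar)`.
Here `Em, Ep, Ps, Pm, Ms, Mp` play the roles of
`A_{i*}^-, A_{i*}^+, A_{i*+2}^*, A_{i*+2}^-, A_{i*-2}^*, A_{i*-2}^+`. -/
def IsGoodTripleTEOn (G : SimpleGraph V) (S : Set V) (A : ZMod 7 → Set V)
    (C : Set V) (istar : ZMod 7) : Prop :=
  (C ∪ ⋃ i, A i) = S ∧
  (∀ i, Disjoint C (A i)) ∧
  (∀ i j : ZMod 7, i ≠ j → Disjoint (A i) (A j)) ∧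
  C.Nonempty ∧ G.IsClique C ∧
  (∀ i, (A i).Nonempty ∧ G.IsClique (A i)) ∧
  (∀ i, CompleteTo G (A i) (A (i - 1) ∪ A (i + 1)) ∧
        AnticompleteTo G (A i) (A (i - 3) ∪ A (i + 3))) ∧
  (∀ i, (i = istar - 3 ∨ i = istar - 1 ∨ i = istar + 1 ∨ i = istar + 3) →
        AnticompleteTo G (A i) (A (i - 2) ∪ A (i + 2))) ∧
  ∃ Em Ep Ps Pm Ms Mp : Set V,
    Em.Nonempty ∧ Ep.Nonempty ∧ Ps.Nonempty ∧ Pm.Nonempty ∧ Ms.Nonempty ∧ Mp.Nonempty ∧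
    List.Pairwise (fun X Y : Set V => Disjoint X Y) [Em, Ep, Ps, Pm, Ms, Mp] ∧
    G.IsClique Em ∧ G.IsClique Ep ∧ G.IsClique Ps ∧ G.IsClique Pm ∧
    G.IsClique Ms ∧ G.IsClique Mp ∧
    A istar = Em ∪ Ep ∧
    A (istar + 2) = Ps ∪ Pm ∧
    A (istar - 2) = Ms ∪ Mp ∧
    CompleteTo G Em Mp ∧ AnticompleteTo G Em (Ms ∪ A (istar + 2)) ∧
    CompleteTo G Ep Pm ∧ AnticompleteTo G Ep (Ps ∪ A (istar - 2)) ∧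
    CompleteTo G C (Ps ∪ A (istar + 3) ∪ A (istar - 3) ∪ Ms) ∧
    AnticompleteTo G C (Mp ∪ A (istar - 1) ∪ A istar ∪ A (istar + 1) ∪ Pm)

/-- The induced subgraph of `G` on `S` is a thickened emerald. -/
def IsThickenedEmeraldOn (G : SimpleGraph V) (S : Set V) : Prop :=
  ∃ A C istar, IsGoodTripleTEOn G S A C istar

/-- The neighborhoods in `Y` of the vertices of `X` form a chain under inclusion whose
largest element is all of `Y`: this encodes "`X` can be ordered as `x_1, …, x_t` so that
`N[x_t] ∩ Y ⊆ ⋯ ⊆ N[x_1] ∩ Y = Y`". -/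
def ChainedPairTo (G : SimpleGraph V) (X Y : Set V) : Prop :=
  (∀ u ∈ X, ∀ v ∈ X, nbrIn G Y u ⊆ nbrIn G Y v ∨ nbrIn G Y v ⊆ nbrIn G Y u) ∧
  (∃ u ∈ X, ∀ y ∈ Y, G.Adj u y)

/-- The induced subgraph of `G` on `S` is an `r`-lantern with good partition
`(A, Bs 0, …, Bs (r-1), Cs 0, …, Cs (r-1), D)`, where the index `0 : Fin r` plays the role
of the index `1` of the paper. -/
def IsLanternPartitionOn (G : SimpleGraph V) (S : Set V) (r : ℕ)
    (A D : Set V) (Bs Cs : Fin r → Set V) : Prop :=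
  (A ∪ D ∪ (⋃ i, Bs i) ∪ (⋃ i, Cs i)) = S ∧
  Disjoint A D ∧
  (∀ i, Disjoint A (Bs i) ∧ Disjoint A (Cs i) ∧ Disjoint D (Bs i) ∧ Disjoint D (Cs i)) ∧
  (∀ i j, Disjoint (Bs i) (Cs j)) ∧
  (∀ i j, i ≠ j → Disjoint (Bs i) (Bs j) ∧ Disjoint (Cs i) (Cs j)) ∧
  A.Nonempty ∧ D.Nonempty ∧ (∀ i, (Bs i).Nonempty ∧ (Cs i).Nonempty) ∧
  G.IsClique A ∧ G.IsClique D ∧ (∀ i, G.IsClique (Bs i) ∧ G.IsClique (Cs i)) ∧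
  AnticompleteTo G A D ∧
  (∀ i, CompleteTo G A (Bs i) ∧ AnticompleteTo G A (Cs i)) ∧
  (∀ i, CompleteTo G D (Cs i) ∧ AnticompleteTo G D (Bs i)) ∧
  (∀ i : Fin r, i.val = 0 → ChainedPairTo G (Bs i) (Cs i) ∧ ChainedPairTo G (Cs i) (Bs i)) ∧
  (∀ i : Fin r, i.val ≠ 0 → CompleteTo G (Bs i) (Cs i)) ∧
  (∀ i j, i ≠ j → AnticompleteTo G (Bs i ∪ Cs i) (Bs j ∪ Cs j))

/-- The induced subgraph of `G` on `S` is a lantern. -/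
def IsLanternOn (G : SimpleGraph V) (S : Set V) : Prop :=
  ∃ r : ℕ, 3 ≤ r ∧ ∃ (A D : Set V) (Bs Cs : Fin r → Set V),
    IsLanternPartitionOn G S r A D Bs Cs

/-- The induced subgraph of `G` on `S` is a thickened `Θ₃ʳ` with good partition
`(A, Bs, Cs, D)`. -/
def IsThickThetaPartitionOn (G : SimpleGraph V) (S : Set V) (r : ℕ)
    (A D : Set V) (Bs Cs : Fin r → Set V) : Prop :=
  (A ∪ D ∪ (⋃ i, Bs i) ∪ (⋃ i, Cs i)) = S ∧
  Disjoint A D ∧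
  (∀ i, Disjoint A (Bs i) ∧ Disjoint A (Cs i) ∧ Disjoint D (Bs i) ∧ Disjoint D (Cs i)) ∧
  (∀ i j, Disjoint (Bs i) (Cs j)) ∧
  (∀ i j, i ≠ j → Disjoint (Bs i) (Bs j) ∧ Disjoint (Cs i) (Cs j)) ∧
  A.Nonempty ∧ D.Nonempty ∧ (∀ i, (Bs i).Nonempty ∧ (Cs i).Nonempty) ∧
  G.IsClique A ∧ G.IsClique D ∧ (∀ i, G.IsClique (Bs i) ∧ G.IsClique (Cs i)) ∧
  AnticompleteTo G A D ∧
  (∀ i, CompleteTo G A (Bs i) ∧ AnticompleteTo G A (Cs i)) ∧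
  (∀ i, CompleteTo G D (Cs i) ∧ AnticompleteTo G D (Bs i)) ∧
  (∀ i, CompleteTo G (Bs i) (Cs i)) ∧
  (∀ i j, i ≠ j → AnticompleteTo G (Bs i ∪ Cs i) (Bs j ∪ Cs j))

/-- The induced subgraph of `G` on `S` is a `k`-ring with partition `X`. -/
def IsRingPartitionOn (G : SimpleGraph V) (S : Set V) (k : ℕ) (X : ZMod k → Set V) : Prop :=
  (⋃ i, X i) = S ∧
  (∀ i j : ZMod k, i ≠ j → Disjoint (X i) (X j)) ∧
  (∀ i, (X i).Nonempty) ∧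
  (∀ i, ∀ u ∈ X i, X i ⊆ cnbr G S u) ∧
  (∀ i, ∀ u ∈ X i, cnbr G S u ⊆ X (i - 1) ∪ X i ∪ X (i + 1)) ∧
  (∀ i, ∃ u ∈ X i, cnbr G S u = X (i - 1) ∪ X i ∪ X (i + 1)) ∧
  (∀ i, ∀ u ∈ X i, ∀ v ∈ X i, cnbr G S u ⊆ cnbr G S v ∨ cnbr G S v ⊆ cnbr G S u)

/-- The induced subgraph of `G` on `S` is a ring (of some length `k ≥ 4`). -/
def IsRingOn (G : SimpleGraph V) (S : Set V) : Prop :=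
  ∃ k : ℕ, 4 ≤ k ∧ ∃ X : ZMod k → Set V, IsRingPartitionOn G S k X

/-- The induced subgraph of `G` on `S` is a 6-ring. -/
def IsRing6On (G : SimpleGraph V) (S : Set V) : Prop :=
  ∃ X : ZMod 6 → Set V, IsRingPartitionOn G S 6 X

/-- The induced subgraph of `G` on `S` is a 6-wreath. -/
def IsWreath6On (G : SimpleGraph V) (S : Set V) : Prop :=
  ∃ X : ZMod 6 → Set V, IsRingPartitionOn G S 6 X ∧
    CompleteTo G (X 0) (X 1) ∧ CompleteTo G (X 2) (X 3) ∧ CompleteTo G (X 4) (X 5)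

/-- The induced subgraph of `G` on `S` is a 6-crown with good triple `(C, D, istar)`. -/
def IsCrownTripleOn (G : SimpleGraph V) (S : Set V) (C D : ZMod 6 → Set V)
    (istar : ZMod 6) : Prop :=
  ((⋃ i, C i) ∪ (⋃ i, D i)) = S ∧
  (∀ i j : ZMod 6, i ≠ j → Disjoint (C i) (C j) ∧ Disjoint (D i) (D j)) ∧
  (∀ i j : ZMod 6, Disjoint (C i) (D j)) ∧
  (∀ i, G.IsClique (C i) ∧ G.IsClique (D i)) ∧
  (∀ i, (C i).Nonempty) ∧
  D (istar - 2) = ∅ ∧ D (istar - 1) = ∅ ∧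
  (D (istar + 1)).Nonempty ∧ (D (istar + 2)).Nonempty ∧ (D (istar + 3)).Nonempty ∧
  (∀ i, CompleteTo G (C i) (C (i - 1) ∪ C (i + 1)) ∧
        AnticompleteTo G (C i) (C (i + 2) ∪ C (i + 3) ∪ C (i + 4))) ∧
  (∀ i, CompleteTo G (D i) (C (i - 1) ∪ C i ∪ C (i + 1)) ∧
        AnticompleteTo G (D i) (C (i + 2) ∪ C (i + 3) ∪ C (i + 4))) ∧
  (∀ i j : ZMod 6, i ≠ j → AnticompleteTo G (D i) (D j))

/-- The induced subgraph of `G` on `S` is a 6-crown. -/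
def IsCrown6On (G : SimpleGraph V) (S : Set V) : Prop :=
  ∃ C D istar, IsCrownTripleOn G S C D istar

/-- The set `X`: vertices outside `S` mixed on `S`. -/
def setX (G : SimpleGraph V) (S : Set V) : Set V :=
  {v | v ∉ S ∧ (∃ w ∈ S, G.Adj v w) ∧ ∃ w ∈ S, ¬ G.Adj v w}

/-- The set `L_A`: vertices of `X` with a neighbor in `A`, anticomplete to `S \ A`. -/
def setL (G : SimpleGraph V) (S A : Set V) : Set V :=
  {v | v ∈ setX G S ∧ (∃ w ∈ A, G.Adj v w) ∧ ∀ w ∈ S \ A, ¬ G.Adj v w}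

/-- The set `T_{B_i}` (for `A := A`, `Bi := B_i`, `Ci := C_i`): vertices of `X` complete to
`A ∪ B_i`, mixed on `C_i`, anticomplete to `S \ (A ∪ B_i ∪ C_i)`. -/
def setT (G : SimpleGraph V) (S A Bi Ci : Set V) : Set V :=
  {v | v ∈ setX G S ∧ (∀ w ∈ A ∪ Bi, G.Adj v w) ∧
       (∃ w ∈ Ci, G.Adj v w) ∧ (∃ w ∈ Ci, ¬ G.Adj v w) ∧
       ∀ w ∈ S \ (A ∪ Bi ∪ Ci), ¬ G.Adj v w}

/-- The set `R_{B_i}`: vertices of `X` complete to `A`, with a neighbor in `B_i`,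
anticomplete to `S \ (A ∪ B_i)`. -/
def setR (G : SimpleGraph V) (S A Bi : Set V) : Set V :=
  {v | v ∈ setX G S ∧ (∀ w ∈ A, G.Adj v w) ∧ (∃ w ∈ Bi, G.Adj v w) ∧
       ∀ w ∈ S \ (A ∪ Bi), ¬ G.Adj v w}

end Paper

open Paper

/-!
Order each part `X i` by decreasing closed neighbourhood. If `v ∈ X i` and `w ∈ X (i + 1)` are
adjacent, every vertex of `X i` whose neighbourhood contains `N[v]` is adjacent to every vertex of
`X (i + 1)` whose neighbourhood contains `N[w]`, so these two initial segments together form a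
clique: the ranks of `v` and `w` sum to at most `ω - 2`. Colouring even parts by rank and odd parts
by `ω - 1 - rank` is therefore proper, and the number of parts being even makes this consistent.
-/

namespace Finset

variable {α β : Type*} [Preorder β] [DecidableLE β]

lemma exists_injOn_lt_card_filter_le (g : α → β) (s : Finset α)
    (htot : ∀ u ∈ s, ∀ v ∈ s, g u ≤ g v ∨ g v ≤ g u) :
    ∃ f : α → ℕ, Set.InjOn f s ∧ ∀ v ∈ s, f v < #{u ∈ s | g v ≤ g u} := by
  classical
  induction s using Finset.strongInduction with
  | H s ih =>
  rcases s.eq_empty_or_nonempty with rfl | hs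
  · exact ⟨0, by simp, by simp⟩
  obtain ⟨m, hm, hmin⟩ := s.exists_minimalFor g hs
  have hm_le : ∀ u ∈ s, g m ≤ g u := fun u hu => (htot m hm u hu).elim id (hmin hu)
  obtain ⟨f, hinj, hlt⟩ := ih (s.erase m) (s.erase_ssubset hm)
    (fun u hu v hv => htot u (mem_of_mem_erase hu) v (mem_of_mem_erase hv))
  have hf_lt : ∀ v ∈ s.erase m, f v < #s - 1 := fun v hv =>
    calc f v < #{u ∈ s.erase m | g v ≤ g u} := hlt v hv
      _ ≤ #(s.erase m) := card_filter_le _ _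
      _ = #s - 1 := card_erase_of_mem hm
  -- the bottom element `m` takes the last position
  refine ⟨Function.update f m (#s - 1), ?_, fun v hv => ?_⟩
  · intro u hu v hv huv
    by_cases hum : u = m <;> by_cases hvm : v = m
    · exact hum.trans hvm.symm
    · subst hum
      simp only [Function.update_self, Function.update_of_ne hvm] at huv
      exact absurd huv.symm (hf_lt v (mem_erase.2 ⟨hvm, hv⟩)).ne
    · subst hvm
      simp only [Function.update_self, Function.update_of_ne hum] at huv
      exact absurd huv (hf_lt u (mem_erase.2 ⟨hum, hu⟩)).ne
    · simp only [Function.update_of_ne hum, Function.update_of_ne hvm] at huv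
      exact hinj (mem_erase.2 ⟨hum, hu⟩) (mem_erase.2 ⟨hvm, hv⟩) huv
  · by_cases hvm : v = m
    · subst hvm
      rw [Function.update_self, filter_true_of_mem hm_le]
      exact Nat.sub_lt (card_pos.2 hs) one_pos
    · rw [Function.update_of_ne hvm]
      exact (hlt v (mem_erase.2 ⟨hvm, hv⟩)).trans_le
        (card_le_card (filter_subset_filter _ (erase_subset m s)))

end Finset

namespace SimpleGraph

variable {V : Type*} {G : SimpleGraph V}

lemma colorable_of_parity_rank {n : ℕ} (p : V → ZMod 2) (r : V → ℕ) (hr : ∀ v, r v < n)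
    (hsame : ∀ v w, G.Adj v w → p v = p w → r v ≠ r w)
    (hdiff : ∀ v w, G.Adj v w → p v ≠ p w → r v + r w + 2 ≤ n) : G.Colorable n := by
  have hflip : ∀ a b : ZMod 2, a ≠ b → (a = 0 ↔ b ≠ 0) := by decide
  refine ⟨Coloring.mk (fun v => ⟨if p v = 0 then r v else n - 1 - r v, ?_⟩) ?_⟩
  · have := hr v
    split_ifs <;> omega
  · intro v w hvw heq
    simp only [Fin.mk.injEq] at heq
    have hv := hr v
    have hw := hr w
    by_cases hp : p v = p w
    · have := hsame v w hvw hp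
      rw [hp] at heq
      split_ifs at heq <;> omega
    · have := hdiff v w hvw hp
      by_cases hv0 : p v = 0
      · rw [if_pos hv0, if_neg ((hflip _ _ hp).1 hv0)] at heq
        omega
      · rw [if_neg hv0, if_pos (not_not.1 (mt (hflip _ _ hp).2 hv0))] at heq
        omega

end SimpleGraph

namespace Paper

open Finset

variable {V : Type*} {G : SimpleGraph V} {k : ℕ} {X : ZMod k → Set V}

lemma mem_cnbr_univ {v w : V} : w ∈ cnbr G Set.univ v ↔ w = v ∨ G.Adj v w := by
  simp [cnbr]

lemma adj_of_adj_of_cnbr_subset {v w a b : V} (hvw : G.Adj v w)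
    (ha : cnbr G Set.univ v ⊆ cnbr G Set.univ a) (hb : cnbr G Set.univ w ⊆ cnbr G Set.univ b)
    (haw : a ≠ w) (hab : a ≠ b) : G.Adj a b := by
  have hwa : G.Adj a w := by
    simpa [mem_cnbr_univ, haw.symm] using ha (mem_cnbr_univ.2 (Or.inr hvw))
  have hba : G.Adj w a := hwa.symm
  simpa [mem_cnbr_univ, hab, adj_comm] using hb (mem_cnbr_univ.2 (Or.inr hba))

namespace IsRingPartitionOn

lemma exists_mem (hX : IsRingPartitionOn G Set.univ k X) (v : V) : ∃ i, v ∈ X i :=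
  Set.mem_iUnion.1 (hX.1.symm ▸ Set.mem_univ v)

lemma eq_of_mem (hX : IsRingPartitionOn G Set.univ k X) {v : V} {i j : ZMod k}
    (hi : v ∈ X i) (hj : v ∈ X j) : i = j := by
  by_contra hij
  exact Set.disjoint_left.1 (hX.2.1 i j hij) hi hj

lemma isClique (hX : IsRingPartitionOn G Set.univ k X) (i : ZMod k) : G.IsClique (X i) :=
  fun u hu _ hv huv => (mem_cnbr_univ.1 (hX.2.2.2.1 i u hu hv)).resolve_left huv.symm

lemma index_of_adj (hX : IsRingPartitionOn G Set.univ k X)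
    {v w : V} {i j : ZMod k} (hvw : G.Adj v w) (hv : v ∈ X i) (hw : w ∈ X j) :
    j = i - 1 ∨ j = i ∨ j = i + 1 := by
  rcases hX.2.2.2.2.1 i v hv (mem_cnbr_univ.2 (Or.inr hvw)) with (h | h) | h
  · exact Or.inl (hX.eq_of_mem hw h)
  · exact Or.inr (Or.inl (hX.eq_of_mem hw h))
  · exact Or.inr (Or.inr (hX.eq_of_mem hw h))

lemma cnbr_total (hX : IsRingPartitionOn G Set.univ k X) (i : ZMod k) {u v : V}
    (hu : u ∈ X i) (hv : v ∈ X i) :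
    cnbr G Set.univ u ≤ cnbr G Set.univ v ∨ cnbr G Set.univ v ≤ cnbr G Set.univ u :=
  hX.2.2.2.2.2.2 i u hu v hv

open Classical in
lemma card_add_card_le_cliqueNum [Fintype V] (hX : IsRingPartitionOn G Set.univ k X)
    {v w : V} {i : ZMod k} (hvw : G.Adj v w) (hw : w ∈ X (i + 1)) (hi : i + 1 ≠ i) :
    #{u ∈ (X i).toFinset | cnbr G Set.univ v ≤ cnbr G Set.univ u} +
      #{u ∈ (X (i + 1)).toFinset | cnbr G Set.univ w ≤ cnbr G Set.univ u} ≤ G.cliqueNum := by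
  set P := {u ∈ (X i).toFinset | cnbr G Set.univ v ≤ cnbr G Set.univ u}
  set Q := {u ∈ (X (i + 1)).toFinset | cnbr G Set.univ w ≤ cnbr G Set.univ u}
  have hP : ∀ a ∈ P, a ∈ X i ∧ cnbr G Set.univ v ⊆ cnbr G Set.univ a := by simp [P]
  have hQ : ∀ b ∈ Q, b ∈ X (i + 1) ∧ cnbr G Set.univ w ⊆ cnbr G Set.univ b := by simp [Q]
  have hsep : ∀ a ∈ P, ∀ b ∈ Q, a ≠ b := fun a ha b hb hab =>
    hi (hX.eq_of_mem (hab ▸ (hQ b hb).1) (hP a ha).1)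
  have hcross : ∀ a ∈ P, ∀ b ∈ Q, G.Adj a b := fun a ha b hb =>
    adj_of_adj_of_cnbr_subset hvw (hP a ha).2 (hQ b hb).2 (hsep a ha w (by simp [Q, hw]))
      (hsep a ha b hb)
  have hclique : G.IsClique (↑(P ∪ Q) : Set V) := by
    intro a ha b hb hab
    simp only [coe_union, Set.mem_union, mem_coe] at ha hb
    rcases ha with ha | ha <;> rcases hb with hb | hb
    · exact hX.isClique i (hP a ha).1 (hP b hb).1 hab
    · exact hcross a ha b hb
    · exact (hcross b hb a ha).symm
    · exact hX.isClique _ (hQ a ha).1 (hQ b hb).1 hab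
  rw [← card_union_of_disjoint (disjoint_left.2 fun a ha haQ => hsep a ha a haQ rfl)]
  exact hclique.card_le_cliqueNum

theorem colorable_cliqueNum [Fintype V] (hX : IsRingPartitionOn G Set.univ k X)
    (hk : 2 ∣ k) : G.Colorable G.cliqueNum := by
  classical
  choose idx hidx using hX.exists_mem
  have hmem : ∀ v, v ∈ (X (idx v)).toFinset := fun v => Set.mem_toFinset.2 (hidx v)
  choose f hinj hlt using fun i => exists_injOn_lt_card_filter_le (cnbr G Set.univ)
    (X i).toFinset fun u hu v hv =>
      hX.cnbr_total i (Set.mem_toFinset.1 hu) (Set.mem_toFinset.1 hv)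
  set par := ZMod.castHom hk (ZMod 2)
  have hpar : ∀ i, par (i + 1) ≠ par i := fun i => by
    rw [map_add, map_one]
    generalize par i = a
    revert a
    decide
  have hrank : ∀ v, f (idx v) v + 1 ≤
      #{u ∈ (X (idx v)).toFinset | cnbr G Set.univ v ≤ cnbr G Set.univ u} :=
    fun v => hlt _ v (hmem v)
  have hconsec : ∀ v w, G.Adj v w → idx w = idx v + 1 →
      f (idx v) v + f (idx w) w + 2 ≤ G.cliqueNum := fun v w hvw h => by
    have hv := hrank v
    have hw := hrank w
    rw [h] at hw ⊢
    have := hX.card_add_card_le_cliqueNum hvw (h ▸ hidx w) fun h' => hpar _ (congrArg par h')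
    omega
  refine colorable_of_parity_rank (fun v => par (idx v)) (fun v => f (idx v) v)
    (fun v => ?_) (fun v w hvw hp => ?_) (fun v w hvw hp => ?_)
  · calc f (idx v) v
        < #{u ∈ (X (idx v)).toFinset | cnbr G Set.univ v ≤ cnbr G Set.univ u} := hrank v
      _ ≤ #(X (idx v)).toFinset := card_filter_le _ _
      _ ≤ G.cliqueNum := IsClique.card_le_cliqueNum (tc := by simpa using hX.isClique (idx v))
  · have hsame : idx w = idx v := by
      rcases hX.index_of_adj hvw (hidx v) (hidx w) with h | h | h
      · have hwv : idx w + 1 = idx v := by rw [h, sub_add_cancel]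
        exact (hpar (idx w) (by rw [hwv]; exact hp)).elim
      · exact h
      · exact (hpar (idx v) (by rw [← h]; exact hp.symm)).elim
    intro hf
    rw [hsame] at hf
    exact hvw.ne (hinj (idx v) (hmem v) (hsame ▸ hmem w) hf)
  · rcases hX.index_of_adj hvw (hidx v) (hidx w) with h | h | h
    · have := hconsec w v hvw.symm (by rw [h, sub_add_cancel])
      omega
    · exact absurd (congrArg par h).symm hp
    · exact hconsec v w hvw h

end IsRingPartitionOn

end Paper

theorem statement_19 {V : Type*} [Fintype V] (R : SimpleGraph V)
    (h : IsRing6On R Set.univ) :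
    R.chromaticNumber = (cliqueNumber R : ℕ∞) := by
  obtain ⟨X, hX⟩ := h
  exact le_antisymm (hX.colorable_cliqueNum (by norm_num)).chromaticNumber_le
    R.cliqueNum_le_chromaticNumber
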